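/- Define X_{a,b;c} := Ш_{a,b}^{↑c} · β_{c,b} ∈ 𝕜B_∞ for integers a, b with a + b ≥ 0 and c ≥ 0. Then for all integers a, b with a + b ≥ 0 and b ≥ 1, and all c ≥ 0: X_{a+1,b;c} = X_{a,b;c} + X_{a+1,b−1;c} · β_{a+c+1,1}^{↑(b−1)}. -/

import Mathlib

/-!
Unfolding `X`, the recursion is the Pascal recursion `Ш_{k,n+1} = Ш_{k-1,n+1} + Ш_{k,n} β_{k,1}^{↑n}`
(with `k = a + 1`; it also holds at `k = 0`, where `Ш_{-1,n+1} = 0` and `β_{0,1} = 1`), shifted by `c`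
and multiplied on the right by `β_{c,n+1}`. What remains is the braid identity
`β_{k,1}^{↑(n+c)} β_{c,n+1} = β_{c,n} β_{k+c,1}^{↑n}`. It holds because `β_{k,1} = σ_k ⋯ σ_1`,
`β_{c,n+1} = β_{c,n} (σ_{c+n} ⋯ σ_{n+1})`, and the letters `σ_{k+n+c} ⋯ σ_{n+c+1}` commute with
`β_{c,n}`, which lies in `B_{c+n}`. For `a + 1 < 0` all three terms vanish.
-/

namespace BraidPaper

/-- Relations of the infinite Artin braid group `B_∞`.  The generator with index `n : ℕ`
represents the Artin generator `σ_{n+1}` (so generators are `σ_1, σ_2, …`). -/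
def BraidRels : Set (FreeGroup ℕ) :=
  {r | (∃ i : ℕ, r = .of i * .of (i + 1) * .of i * (.of (i + 1) * .of i * .of (i + 1))⁻¹) ∨
       (∃ i j : ℕ, i + 2 ≤ j ∧ r = .of i * .of j * (.of j * .of i)⁻¹)}

/-- The infinite Artin braid group `B_∞`, presented by generators `σ_1, σ_2, …` and the
braid and far-commutativity relations. -/
abbrev BInf : Type := PresentedGroup BraidRels

/-- The Artin generator `σ i` of `B_∞` (meaningful for `i ≥ 1`). -/
def σ (i : ℕ) : BInf := PresentedGroup.of (i - 1)

lemma rel_eq_one {r : FreeGroup ℕ} (hr : r ∈ BraidRels) : PresentedGroup.mk BraidRels r = 1 := by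
  have : r ∈ Subgroup.normalClosure BraidRels := Subgroup.subset_normalClosure hr
  exact (QuotientGroup.eq_one_iff r).mpr this

lemma gen_braid (i : ℕ) :
    (PresentedGroup.of i : BInf) * .of (i + 1) * .of i = .of (i + 1) * .of i * .of (i + 1) := by
  have h := rel_eq_one (Or.inl ⟨i, rfl⟩)
  rw [map_mul, map_mul, map_mul, map_inv, map_mul, map_mul, mul_inv_eq_one] at h
  exact h

lemma gen_comm {i j : ℕ} (hij : i + 2 ≤ j) :
    (PresentedGroup.of i : BInf) * .of j = .of j * .of i := by
  have h := rel_eq_one (Or.inr ⟨i, j, hij, rfl⟩)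
  rw [map_mul, map_mul, map_inv, map_mul, mul_inv_eq_one] at h
  exact h

/-- The shift endomorphism `↑ℓ : B_∞ → B_∞`, `σ_i ↦ σ_{i+ℓ}`. -/
def shift (l : ℕ) : BInf →* BInf :=
  PresentedGroup.toGroup (f := fun n => (PresentedGroup.of (n + l) : BInf)) (by
    rintro r (⟨i, rfl⟩ | ⟨i, j, hij, rfl⟩) <;>
      simp only [map_mul, map_inv, FreeGroup.lift_apply_of, mul_inv_eq_one]
    · have h1 : i + 1 + l = i + l + 1 := by omega
      rw [h1]; exact gen_braid (i + l)
    · exact gen_comm (by omega : (i + l) + 2 ≤ j + l))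

/-- The ascending product `σ_i σ_{i+1} ⋯ σ_{i+l-1}` (of `l` factors). -/
def asc (i l : ℕ) : BInf := ((List.range l).map fun t => σ (i + t)).prod

/-- The descending product `σ_i σ_{i-1} ⋯ σ_{i-k+1}` (of `k` factors). -/
def desc (i k : ℕ) : BInf := ((List.range k).map fun t => σ (i - t)).prod

/-- The block transposition braid
`β_{k,l} = (σ_k σ_{k+1} ⋯ σ_{k+l-1})(σ_{k-1} σ_k ⋯ σ_{k+l-2}) ⋯ (σ_1 σ_2 ⋯ σ_l)`,
with `β_{k,0} = β_{0,l} = 1`. -/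
def β (k l : ℕ) : BInf := ((List.range k).map fun r => asc (k - r) l).prod

/-- The positive (Garside) lift `ω_a = β_{1,1} β_{2,1} ⋯ β_{a-1,1}` of the longest element of
the symmetric group `S_a`, with `ω_0 = ω_1 = 1`. -/
def ω (a : ℕ) : BInf := ((List.range (a - 1)).map fun t => β (t + 1) 1).prod

/-- The copy of the braid group `B_n` inside `B_∞`: the subgroup generated by
`σ_1, …, σ_{n-1}`. -/
def BSub (n : ℕ) : Subgroup BInf := Subgroup.closure {g | ∃ i, 1 ≤ i ∧ i < n ∧ g = σ i}


variable (𝕜 : Type) [CommRing 𝕜]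

/-- The canonical embedding of `B_∞` into its group algebra `𝕜B_∞`. -/
noncomputable def ι (g : BInf) : MonoidAlgebra 𝕜 BInf := MonoidAlgebra.of 𝕜 BInf g

/-- The shift `↑ℓ` extended (as an algebra homomorphism) to the group algebra `𝕜B_∞`. -/
noncomputable def shiftA (l : ℕ) : MonoidAlgebra 𝕜 BInf →ₐ[𝕜] MonoidAlgebra 𝕜 BInf :=
  MonoidAlgebra.mapDomainAlgHom 𝕜 𝕜 (shift l)

/-- The braid shuffle elements `Ш_{m,n} ∈ 𝕜B_∞` (for natural `m, n`), determined by
`Ш_{0,n} = Ш_{m,0} = 1` and the Pascal-type recursion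
`Ш_{m,n} = Ш_{m-1,n} + Ш_{m,n-1} β_{m,1}^{↑(n-1)}`. -/
noncomputable def Sh : ℕ → ℕ → MonoidAlgebra 𝕜 BInf
  | 0, _ => 1
  | _ + 1, 0 => 1
  | m + 1, n + 1 => Sh m (n + 1) + Sh (m + 1) n * ι 𝕜 (shift n (β (m + 1) 1))
  termination_by m n => (m, n)

/-- The braid shuffle elements `Ш_{m,n} ∈ 𝕜B_∞` for integer indices: `Ш_{m,n} = 0` whenever
`m < 0` or `n < 0`. -/
noncomputable def ShZ (m n : ℤ) : MonoidAlgebra 𝕜 BInf :=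
  if 0 ≤ m ∧ 0 ≤ n then Sh 𝕜 m.toNat n.toNat else 0

/-- The braid Pochhammer symbol
`P_{k,n}(x,y) = (x - β_{k,1} y)(x - β_{k+1,1} y) ⋯ (x - β_{k+n-1,1} y) ∈ 𝕜B_∞`. -/
noncomputable def Poch (k n : ℕ) (x y : 𝕜) : MonoidAlgebra 𝕜 BInf :=
  ((List.range n).map fun t =>
    algebraMap 𝕜 (MonoidAlgebra 𝕜 BInf) x - algebraMap 𝕜 (MonoidAlgebra 𝕜 BInf) y * ι 𝕜 (β (k + t) 1)).prod

/-- The combination `X_{a,b;c} := Ш_{a,b}^{↑c} β_{c,b}`. -/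
noncomputable def Xcal (a b : ℤ) (c : ℕ) : MonoidAlgebra 𝕜 BInf :=
  shiftA 𝕜 c (ShZ 𝕜 a b) * ι 𝕜 (β c b.toNat)

lemma σ_commute_σ {i j : ℕ} (hi : 1 ≤ i) (hij : i + 2 ≤ j) : Commute (σ i) (σ j) :=
  gen_comm (i := i - 1) (j := j - 1) (by omega)

lemma shift_σ (l : ℕ) {i : ℕ} (hi : 1 ≤ i) : shift l (σ i) = σ (i + l) := by
  unfold shift σ
  rw [PresentedGroup.toGroup.of]
  congr 1
  omega

lemma β_mem_BSub (k l : ℕ) : β k l ∈ BSub (k + l) := by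
  refine Subgroup.list_prod_mem (K := BSub (k + l)) ?_
  simp only [List.mem_map, List.mem_range]
  rintro _ ⟨r, hr, rfl⟩
  refine Subgroup.list_prod_mem (K := BSub (k + l)) ?_
  simp only [List.mem_map, List.mem_range]
  rintro _ ⟨t, ht, rfl⟩
  exact Subgroup.subset_closure ⟨_, by omega, by omega, rfl⟩

lemma BSub_le_centralizer_σ {n m : ℕ} (h : n + 1 ≤ m) : BSub n ≤ Subgroup.centralizer {σ m} :=
  (Subgroup.closure_le _).mpr <| by
    rintro _ ⟨i, hi, hin, rfl⟩
    exact Subgroup.mem_centralizer_singleton_iff.mpr (σ_commute_σ hi (by omega))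

lemma σ_commute_β {m k l : ℕ} (h : k + l + 1 ≤ m) : Commute (σ m) (β k l) :=
  (Subgroup.mem_centralizer_singleton_iff.mp (BSub_le_centralizer_σ h (β_mem_BSub k l))).symm

lemma desc_add (i p q : ℕ) : desc i (p + q) = desc i p * desc (i - p) q := by
  unfold desc
  rw [List.range_add, List.map_append, List.prod_append, List.map_map]
  congr 2
  exact List.map_congr_left fun t _ => by simp [Nat.sub_sub]

lemma desc_succ (i k : ℕ) : desc i (k + 1) = σ i * desc (i - 1) k := by
  rw [add_comm, desc_add]
  simp [desc]

lemma desc_commute_β {i j k l : ℕ} (h : k + l + j ≤ i) : Commute (desc i j) (β k l) :=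
  Commute.list_prod_left _ _ <| by
    simp only [List.mem_map, List.mem_range]
    rintro _ ⟨t, ht, rfl⟩
    exact σ_commute_β (by omega)

lemma shift_desc (l : ℕ) {i k : ℕ} (hk : k ≤ i) : shift l (desc i k) = desc (i + l) k := by
  unfold desc
  rw [map_list_prod, List.map_map]
  congr 1
  refine List.map_congr_left fun t ht => ?_
  rw [List.mem_range] at ht
  rw [Function.comp_apply, shift_σ l (by omega)]
  congr 1
  omega

lemma asc_succ (i l : ℕ) : asc i (l + 1) = asc i l * σ (i + l) := by
  simp [asc, List.range_succ]

lemma β_succ_left (k l : ℕ) : β (k + 1) l = asc (k + 1) l * β k l := by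
  unfold β
  rw [List.range_succ_eq_map, List.map_cons, List.prod_cons, List.map_map]
  congr 2
  exact List.map_congr_left fun r _ => congrArg (asc · l) (by omega)

lemma β_one (k : ℕ) : β k 1 = desc k k := by
  induction k with
  | zero => simp [β, desc]
  | succ k ih => rw [β_succ_left, ih, desc_succ, Nat.add_sub_cancel]; simp [asc]

lemma β_succ_right (k l : ℕ) : β k (l + 1) = β k l * desc (k + l) k := by
  induction k with
  | zero => simp [β, desc]
  | succ k ih =>
    have hσ : Commute (σ (k + 1 + l)) (β k l) := σ_commute_β (by omega)
    rw [β_succ_left, β_succ_left, ih, asc_succ, desc_succ, show k + 1 + l - 1 = k + l by omega,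
      mul_assoc, ← mul_assoc (σ _), hσ.eq]
    group

lemma shift_β_one_mul_β_succ (k n c : ℕ) :
    shift c (shift n (β k 1)) * β c (n + 1) = β c n * shift n (β (k + c) 1) := by
  have hcol : desc (k + c + n) (k + c) = desc (k + n + c) k * desc (c + n) c := by
    rw [desc_add, add_right_comm k n c, show k + c + n - k = c + n by omega]
  rw [β_one, β_one, shift_desc n le_rfl, shift_desc c (by omega), shift_desc n le_rfl,
    β_succ_right, hcol, ← mul_assoc, (desc_commute_β (by omega)).eq, mul_assoc]

lemma ι_mul (g h : BInf) : ι 𝕜 (g * h) = ι 𝕜 g * ι 𝕜 h := map_mul (MonoidAlgebra.of 𝕜 BInf) g h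

lemma shiftA_ι (l : ℕ) (g : BInf) : shiftA 𝕜 l (ι 𝕜 g) = ι 𝕜 (shift l g) := by
  simp [shiftA, ι, MonoidAlgebra.mapDomain_single]

lemma Sh_zero_left (n : ℕ) : Sh 𝕜 0 n = 1 := by rw [Sh]

lemma Sh_succ_succ (m n : ℕ) :
    Sh 𝕜 (m + 1) (n + 1) = Sh 𝕜 m (n + 1) + Sh 𝕜 (m + 1) n * ι 𝕜 (shift n (β (m + 1) 1)) := by
  rw [Sh]

lemma ShZ_natCast (m n : ℕ) : ShZ 𝕜 m n = Sh 𝕜 m n := by simp [ShZ]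

lemma ShZ_of_neg_left {m : ℤ} (hm : m < 0) (n : ℤ) : ShZ 𝕜 m n = 0 := by
  simp [ShZ, hm.not_ge]

lemma ShZ_succ_right (m n : ℕ) :
    ShZ 𝕜 m (n + 1) = ShZ 𝕜 (m - 1) (n + 1) + ShZ 𝕜 m n * ι 𝕜 (shift n (β m 1)) := by
  cases m with
  | zero =>
    have hn : (0 : ℤ) ≤ n + 1 := by omega
    simp [ShZ, hn, Sh_zero_left, β, ι, MonoidAlgebra.one_def]
  | succ m => simpa [← ShZ_natCast] using Sh_succ_succ 𝕜 m n

lemma Xcal_of_neg_left {a : ℤ} (ha : a < 0) (b : ℤ) (c : ℕ) : Xcal 𝕜 a b c = 0 := by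
  simp [Xcal, ShZ_of_neg_left 𝕜 ha]

lemma Xcal_natCast_succ_right (k n c : ℕ) :
    Xcal 𝕜 k (n + 1) c = Xcal 𝕜 (k - 1) (n + 1) c + Xcal 𝕜 k n c * ι 𝕜 (shift n (β (k + c) 1)) := by
  have hn : ((n : ℤ) + 1).toNat = n + 1 := by omega
  rw [Xcal, Xcal, Xcal, ShZ_succ_right, map_add, add_mul, map_mul, shiftA_ι, hn, Int.toNat_natCast,
    mul_assoc, mul_assoc, ← ι_mul, ← ι_mul, shift_β_one_mul_β_succ]

theorem Xcal_recursion (a b : ℤ) (hb : 1 ≤ b) (c : ℕ) :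
    Xcal 𝕜 (a + 1) b c =
      Xcal 𝕜 a b c +
        Xcal 𝕜 (a + 1) (b - 1) c * ι 𝕜 (shift (b - 1).toNat (β (a + (c : ℤ) + 1).toNat 1)) := by
  obtain ⟨n, rfl⟩ : ∃ n : ℕ, b = n + 1 := ⟨(b - 1).toNat, by omega⟩
  rcases lt_or_ge a (-1) with ha | ha
  · simp only [Xcal_of_neg_left 𝕜 (show a + 1 < 0 by omega), Xcal_of_neg_left 𝕜 (show a < 0 by omega),
      zero_mul, add_zero]
  · obtain ⟨k, rfl⟩ : ∃ k : ℕ, a = k - 1 := ⟨(a + 1).toNat, by omega⟩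
    have hk : ((k : ℤ) - 1 + c + 1).toNat = k + c := by omega
    simpa [hk] using Xcal_natCast_succ_right 𝕜 k n c

end BraidPaper
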